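/- arXiv:1409.2094 — 2 statements merged into one kernel-verified Lean document; each statement's English description precedes it below -/
import Mathlib

section
/- Let $\{F_0,\dots,F_\ell\}$ and $\{p_0,\dots,p_\ell\}$ be two sequences of nonnegative numbers such that $p_{j+1} \le p_j + C_0 \max\{F_j, F_{j+1}\}$ for $0\le j\le \ell-1$, and $F_{j+1} \le \tfrac12 F_j + \eta_j K + \eta_j \max\{p_0,\dots,p_{j-1}\} + \eta_j \max\{F_0,\dots,F_{j-1}\}$ for $1\le j\le \ell-1$, where $K\ge 0$, $0\le \eta_1\le \eta_2\le\cdots\le \eta_{\ell-1}=\eta_\ell$, and $\eta_1+\cdots+\eta_\ell\le C_1$. Then there exists a constant $C$, depending only on $C_0$ and $C_1$, such that for all $1\le j\le \ell$: $p_j \le C(K + p_0 + F_0 + F_1)$ and $F_j \le C(2^{-j} + \eta_j)(K + p_0 + F_0 + F_1)$. -/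
/-!
Put `M = K + p 0 + F 0 + F 1` and `S m = F 0 + ⋯ + F m`. Telescoping the first recursion gives
`p i ≤ p 0 + 2 C₀ S i`, so both maxima in the second recursion are controlled by partial sums.
Summing the second recursion over `j` then yields the Grönwall inequality
`S m ≤ (3 + 2 C₁) M + 2 (2 C₀ + 1) ∑_{i<m} η (i+1) S i`, and `∑ η ≤ C₁` bounds every `S m`, hence
every `p i` and `F i`, by `B M` with `B` depending only on `C₀` and `C₁`. Fed back in, these bounds
turn the second recursion into `F (j+1) ≤ F j / 2 + D η j M`, and iterating it with `η`
nondecreasing gives `F j ≤ 2 (2^{-j} F 1 + D η j M)`.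
-/

open Finset Real

lemma le_add_two_mul_sum_of_le_add_mul_max {p F : ℕ → ℝ} {C₀ : ℝ} {n : ℕ} (hC₀ : 0 ≤ C₀)
    (hF : ∀ j ≤ n, 0 ≤ F j) (hp : ∀ j < n, p (j + 1) ≤ p j + C₀ * max (F j) (F (j + 1))) :
    p n ≤ p 0 + 2 * C₀ * ∑ i ∈ range (n + 1), F i := by
  have hstep : ∀ j ∈ range n, p (j + 1) - p j ≤ C₀ * F j + C₀ * F (j + 1) := fun j hj => by
    have hj := mem_range.1 hj
    have := max_le_add_of_nonneg (hF j hj.le) (hF (j + 1) hj)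
    nlinarith [hp j hj]
  have hfirst : ∑ j ∈ range n, F j ≤ ∑ i ∈ range (n + 1), F i := by
    rw [sum_range_succ]; linarith [hF n le_rfl]
  have hlast : ∑ j ∈ range n, F (j + 1) ≤ ∑ i ∈ range (n + 1), F i := by
    rw [sum_range_succ']; linarith [hF 0 (Nat.zero_le n)]
  calc p n = p 0 + ∑ j ∈ range n, (p (j + 1) - p j) := by rw [sum_range_sub]; ring
    _ ≤ p 0 + ∑ j ∈ range n, (C₀ * F j + C₀ * F (j + 1)) := by gcongr with j hj; exact hstep j hj
    _ = p 0 + C₀ * (∑ j ∈ range n, F j + ∑ j ∈ range n, F (j + 1)) := by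
      rw [sum_add_distrib, mul_add, mul_sum, mul_sum]
    _ ≤ p 0 + 2 * C₀ * ∑ i ∈ range (n + 1), F i := by nlinarith

lemma sum_range_le_of_le_half_mul_add {a e : ℕ → ℝ} {n : ℕ} (ha : 0 ≤ a (n + 1))
    (h : ∀ i < n, a (i + 2) ≤ 1 / 2 * a (i + 1) + e i) :
    ∑ i ∈ range (n + 2), a i ≤ a 0 + 2 * a 1 + 2 * ∑ i ∈ range n, e i := by
  have hsum : ∑ i ∈ range n, a (i + 2) ≤ 1 / 2 * ∑ i ∈ range n, a (i + 1) + ∑ i ∈ range n, e i := by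
    rw [mul_sum, ← sum_add_distrib]; exact sum_le_sum fun i hi => h i (mem_range.1 hi)
  have hsplit₂ : ∑ i ∈ range (n + 2), a i = ∑ i ∈ range n, a (i + 2) + a 1 + a 0 := by
    simp only [sum_range_succ']
  have hsplit₁ : ∑ i ∈ range (n + 2), a i = ∑ i ∈ range n, a (i + 1) + a (n + 1) + a 0 := by
    rw [sum_range_succ, sum_range_succ']; ring
  linarith

lemma le_mul_exp_sum_of_le_add_sum_mul {u β : ℕ → ℝ} {A : ℝ} {n : ℕ} (hA : 0 ≤ A)
    (hβ : ∀ i < n, 0 ≤ β i) (hu : ∀ m ≤ n, u m ≤ A + ∑ i ∈ range m, β i * u i) :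
    u n ≤ A * exp (∑ i ∈ range n, β i) := by
  suffices h : ∀ m ≤ n, A + ∑ i ∈ range m, β i * u i ≤ A * exp (∑ i ∈ range m, β i) from
    (hu n le_rfl).trans (h n le_rfl)
  intro m hm
  induction m with
  | zero => simp
  | succ m ih =>
    have hR := ih (by omega)
    calc A + ∑ i ∈ range (m + 1), β i * u i
        = A + ∑ i ∈ range m, β i * u i + β m * u m := by rw [sum_range_succ]; ring
      _ ≤ (1 + β m) * (A + ∑ i ∈ range m, β i * u i) := by
        nlinarith [hu m (by omega), hβ m (by omega)]
      _ ≤ (1 + β m) * (A * exp (∑ i ∈ range m, β i)) :=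
        mul_le_mul_of_nonneg_left hR (by linarith [hβ m (by omega)])
      _ ≤ exp (β m) * (A * exp (∑ i ∈ range m, β i)) :=
        mul_le_mul_of_nonneg_right (by linarith [add_one_le_exp (β m)]) (by positivity)
      _ = A * exp (∑ i ∈ range (m + 1), β i) := by rw [sum_range_succ, exp_add]; ring

lemma sum_range_le_of_le_half_mul_add_mul_sum {F η : ℕ → ℝ} {c C₁ M : ℝ} {ℓ : ℕ}
    (hc : 0 ≤ c) (hC₁ : 0 ≤ C₁) (hF : ∀ j ≤ ℓ, 0 ≤ F j) (hF₀ : F 0 ≤ M) (hF₁ : F 1 ≤ M)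
    (hη : ∀ j, 1 ≤ j → j ≤ ℓ → 0 ≤ η j) (hηsum : ∑ i ∈ range ℓ, η (i + 1) ≤ C₁)
    (hrec : ∀ j, 1 ≤ j → j + 1 ≤ ℓ →
      F (j + 1) ≤ 1 / 2 * F j + η j * (M + c * ∑ i ∈ range j, F i)) :
    ∀ m ≤ ℓ, ∑ i ∈ range (m + 1), F i ≤ (3 + 2 * C₁) * exp (2 * c * C₁) * M := by
  intro m hm
  have hM : 0 ≤ M := (hF 0 (Nat.zero_le _)).trans hF₀
  set u : ℕ → ℝ := fun i => ∑ k ∈ range (i + 1), F k with hu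
  have hu_nonneg : ∀ i ≤ ℓ, 0 ≤ u i := fun i hi =>
    sum_nonneg fun k hk => hF k (by have := mem_range.1 hk; omega)
  have hηpartial : ∀ n ≤ ℓ, ∑ i ∈ range n, η (i + 1) ≤ C₁ := fun n hn =>
    (sum_le_sum_of_subset_of_nonneg (range_subset_range.2 hn) fun i hi _ =>
      hη (i + 1) (by omega) (by have := mem_range.1 hi; omega)).trans hηsum
  have hβ : ∀ i < m, 0 ≤ 2 * c * η (i + 1) := fun i hi => by
    have := hη (i + 1) (by omega) (by omega); positivity
  have hgronwall : ∀ n ≤ m, u n ≤ (3 + 2 * C₁) * M + ∑ i ∈ range n, 2 * c * η (i + 1) * u i := by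
    rintro (_ | n) hn
    · simp only [hu, zero_add, sum_range_one, range_zero, sum_empty, add_zero]
      nlinarith
    · have hsum := sum_range_le_of_le_half_mul_add (a := F)
        (e := fun i => η (i + 1) * (M + c * u i)) (hF (n + 1) (by omega))
        (fun i hi => hrec (i + 1) (by omega) (by omega))
      have hsplit : ∑ i ∈ range n, η (i + 1) * (M + c * u i)
          = M * ∑ i ∈ range n, η (i + 1) + 1 / 2 * ∑ i ∈ range n, 2 * c * η (i + 1) * u i := by
        rw [mul_sum, mul_sum, ← sum_add_distrib]
        exact sum_congr rfl fun i _ => by ring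
      have hlast : 0 ≤ 2 * c * η (n + 1) * u n :=
        mul_nonneg (hβ n (by omega)) (hu_nonneg n (by omega))
      have hMη : M * ∑ i ∈ range n, η (i + 1) ≤ M * C₁ :=
        mul_le_mul_of_nonneg_left (hηpartial n (by omega)) hM
      rw [sum_range_succ]
      change ∑ i ∈ range (n + 2), F i ≤ _
      linarith
  calc u m ≤ (3 + 2 * C₁) * M * exp (∑ i ∈ range m, 2 * c * η (i + 1)) :=
        le_mul_exp_sum_of_le_add_sum_mul (by positivity) hβ hgronwall
    _ ≤ (3 + 2 * C₁) * exp (2 * c * C₁) * M := by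
      rw [mul_right_comm]
      gcongr
      rw [← mul_sum]
      exact mul_le_mul_of_nonneg_left (hηpartial m hm) (by positivity)

theorem apriori_bound_of_iteration {F p η : ℕ → ℝ} {C₀ C₁ K : ℝ} {ℓ : ℕ} (hℓ : 1 ≤ ℓ)
    (hC₀ : 0 ≤ C₀) (hC₁ : 0 ≤ C₁) (hK : 0 ≤ K) (hF : ∀ j ≤ ℓ, 0 ≤ F j) (hp₀ : 0 ≤ p 0)
    (hη : ∀ j, 1 ≤ j → j ≤ ℓ → 0 ≤ η j) (hηsum : ∑ i ∈ range ℓ, η (i + 1) ≤ C₁)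
    (hrec1 : ∀ j, j + 1 ≤ ℓ → p (j + 1) ≤ p j + C₀ * max (F j) (F (j + 1)))
    (hrec2 : ∀ j P G, 1 ≤ j → j + 1 ≤ ℓ → (∀ i < j, p i ≤ P) → (∀ i < j, F i ≤ G) →
      F (j + 1) ≤ 1 / 2 * F j + η j * (K + P + G)) :
    ∀ i ≤ ℓ, p i ≤ (1 + 2 * C₀ * ((3 + 2 * C₁) * exp (2 * (2 * C₀ + 1) * C₁))) *
        (K + p 0 + F 0 + F 1) ∧
      F i ≤ (3 + 2 * C₁) * exp (2 * (2 * C₀ + 1) * C₁) * (K + p 0 + F 0 + F 1) := by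
  set B := (3 + 2 * C₁) * exp (2 * (2 * C₀ + 1) * C₁)
  set M := K + p 0 + F 0 + F 1 with hM_def
  set S : ℕ → ℝ := fun n => ∑ k ∈ range n, F k
  have hF₀ := hF 0 ℓ.zero_le
  have hF₁ := hF 1 hℓ
  have hpF : ∀ i n, i < n → n ≤ ℓ + 1 → p i ≤ p 0 + 2 * C₀ * S n ∧ F i ≤ S n := by
    intro i n hin hn
    have hS : S (i + 1) ≤ S n := sum_le_sum_of_subset_of_nonneg (range_subset_range.2 hin)
      fun k hk _ => hF k (by have := mem_range.1 hk; omega)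
    refine ⟨(le_add_two_mul_sum_of_le_add_mul_max hC₀ (fun k hk => hF k (by omega))
      fun k hk => hrec1 k (by omega)).trans (by gcongr), ?_⟩
    exact (single_le_sum (fun k hk => hF k (by have := mem_range.1 hk; omega))
      (self_mem_range_succ i)).trans hS
  have hS : ∀ i ≤ ℓ, S (i + 1) ≤ B * M := by
    refine sum_range_le_of_le_half_mul_add_mul_sum (by positivity) hC₁ hF (by linarith)
      (by linarith) hη hηsum fun j hj hjℓ => ?_
    refine (hrec2 j _ _ hj hjℓ (fun i hi => (hpF i j hi (by omega)).1)
      (fun i hi => (hpF i j hi (by omega)).2)).trans ?_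
    have hKPG : K + (p 0 + 2 * C₀ * S j) + S j ≤ M + (2 * C₀ + 1) * S j := by linarith
    exact add_le_add_right (mul_le_mul_of_nonneg_left hKPG (hη j hj (by omega))) _
  intro i hi
  obtain ⟨hpi, hFi⟩ := hpF i (i + 1) (by omega) (by omega)
  refine ⟨hpi.trans ?_, hFi.trans (hS i hi)⟩
  calc p 0 + 2 * C₀ * S (i + 1) ≤ M + 2 * C₀ * (B * M) := by
        gcongr
        · linarith
        · exact hS i hi
    _ = (1 + 2 * C₀ * B) * M := by ring

lemma le_half_mul_add_of_le_sup' {F p : ℕ → ℝ} {a K P G : ℝ} {j : ℕ} (hj : (range j).Nonempty)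
    (ha : 0 ≤ a) (hP : ∀ i < j, p i ≤ P) (hG : ∀ i < j, F i ≤ G)
    (h : F (j + 1) ≤ 1 / 2 * F j + a * K + a * (range j).sup' hj p + a * (range j).sup' hj F) :
    F (j + 1) ≤ 1 / 2 * F j + a * (K + P + G) := by
  have hp : (range j).sup' hj p ≤ P := sup'_le _ _ fun i hi => hP i (mem_range.1 hi)
  have hF : (range j).sup' hj F ≤ G := sup'_le _ _ fun i hi => hG i (mem_range.1 hi)
  calc F (j + 1) ≤ 1 / 2 * F j + a * K + a * (range j).sup' hj p + a * (range j).sup' hj F := h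
    _ ≤ 1 / 2 * F j + a * K + a * P + a * G := by gcongr
    _ = 1 / 2 * F j + a * (K + P + G) := by ring

lemma nonneg_of_nonneg_of_le_succ {η : ℕ → ℝ} {n : ℕ} (h₁ : 0 ≤ η 1)
    (hmono : ∀ j, 1 ≤ j → j + 1 ≤ n → η j ≤ η (j + 1)) : ∀ j, 1 ≤ j → j ≤ n → 0 ≤ η j := by
  intro j hj
  induction j, hj using Nat.le_induction with
  | base => exact fun _ => h₁
  | succ j hj ih => exact fun hjn => (ih (by omega)).trans (hmono j hj hjn)

lemma le_two_mul_half_pow_mul_add_of_le_half_mul_add {a b : ℕ → ℝ} {n : ℕ} (hb₁ : 0 ≤ b 1)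
    (hb : ∀ j, 1 ≤ j → j + 1 ≤ n → b j ≤ b (j + 1))
    (h : ∀ j, 1 ≤ j → j + 1 ≤ n → a (j + 1) ≤ 1 / 2 * a j + b j) :
    ∀ j, 1 ≤ j → j ≤ n → a j ≤ 2 * (1 / 2) ^ j * a 1 + 2 * b j := by
  intro j hj
  induction j, hj using Nat.le_induction with
  | base => intro; linarith
  | succ j hj ih =>
    intro hjn
    calc a (j + 1) ≤ 1 / 2 * (2 * (1 / 2) ^ j * a 1 + 2 * b j) + b j :=
          (h j hj hjn).trans (by gcongr; exact ih (by omega))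
      _ = 2 * (1 / 2) ^ (j + 1) * a 1 + 2 * b j := by ring
      _ ≤ 2 * (1 / 2) ^ (j + 1) * a 1 + 2 * b (j + 1) := by linarith [hb j hj hjn]

/-- Lemma 3.1 of Armstrong–Shen: discrete iteration lemma. -/
theorem stmt0 (C₀ C₁ : ℝ) (hC₀ : 0 < C₀) (hC₁ : 0 < C₁) (K : ℝ) (hK : 0 ≤ K)
    (ℓ : ℕ) (F p η : ℕ → ℝ)
    (hF : ∀ j ≤ ℓ, 0 ≤ F j) (hp : ∀ j ≤ ℓ, 0 ≤ p j)
    (hη1 : 0 ≤ η 1)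
    (hηmono : ∀ j, 1 ≤ j → j + 1 ≤ ℓ → η j ≤ η (j + 1))
    (hηsum : ∑ j ∈ Finset.Icc 1 ℓ, η j ≤ C₁)
    (hrec1 : ∀ j, j + 1 ≤ ℓ → p (j + 1) ≤ p j + C₀ * max (F j) (F (j + 1)))
    (hrec2 : ∀ j, ∀ hj : 1 ≤ j, j + 1 ≤ ℓ →
      F (j + 1) ≤ (1 / 2) * F j + η j * K
        + η j * (Finset.range j).sup' (Finset.nonempty_range_iff.mpr (by omega)) p
        + η j * (Finset.range j).sup' (Finset.nonempty_range_iff.mpr (by omega)) F) :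
    ∃ C : ℝ, 0 < C ∧ ∀ j, 1 ≤ j → j ≤ ℓ →
      p j ≤ C * (K + p 0 + F 0 + F 1) ∧
      F j ≤ C * ((1 / 2 : ℝ) ^ j + η j) * (K + p 0 + F 0 + F 1) := by
  set B := (3 + 2 * C₁) * exp (2 * (2 * C₀ + 1) * C₁)
  set D := 2 + (2 * C₀ + 1) * B
  have hB : 0 ≤ B := by positivity
  have hD : 1 ≤ D := by nlinarith
  refine ⟨2 * D, by positivity, fun j hj hjℓ => ?_⟩
  set M := K + p 0 + F 0 + F 1 with hM_def
  have hKM : K ≤ M := by linarith [hF 0 ℓ.zero_le, hp 0 ℓ.zero_le, hF 1 (hj.trans hjℓ)]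
  have hF₁M : F 1 ≤ M := by linarith [hF 0 ℓ.zero_le, hp 0 ℓ.zero_le]
  have hM : 0 ≤ M := (hF 1 (hj.trans hjℓ)).trans hF₁M
  have hη := nonneg_of_nonneg_of_le_succ hη1 hηmono
  have hrec : ∀ j P G, 1 ≤ j → j + 1 ≤ ℓ → (∀ i < j, p i ≤ P) → (∀ i < j, F i ≤ G) →
      F (j + 1) ≤ 1 / 2 * F j + η j * (K + P + G) := fun j P G hj hjℓ hP hG =>
    le_half_mul_add_of_le_sup' _ (hη j hj (by omega)) hP hG (hrec2 j hj hjℓ)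
  have hηsum' : ∑ i ∈ range ℓ, η (i + 1) ≤ C₁ := by
    rwa [range_eq_Ico, sum_Ico_add', zero_add, Ico_add_one_right_eq_Icc]
  have hbound : ∀ i ≤ ℓ, p i ≤ (1 + 2 * C₀ * B) * M ∧ F i ≤ B * M :=
    apriori_bound_of_iteration (hj.trans hjℓ) hC₀.le hC₁.le hK hF (hp 0 ℓ.zero_le) hη hηsum'
      hrec1 hrec
  have hrec' : ∀ j, 1 ≤ j → j + 1 ≤ ℓ → F (j + 1) ≤ 1 / 2 * F j + η j * (D * M) :=
    fun j hj hjℓ => (hrec j _ _ hj hjℓ (fun i hi => (hbound i (by omega)).1)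
      (fun i hi => (hbound i (by omega)).2)).trans
      (add_le_add_right (mul_le_mul_of_nonneg_left (by linear_combination hKM)
        (hη j hj (by omega))) _)
  have hFj := le_two_mul_half_pow_mul_add_of_le_half_mul_add (mul_nonneg hη1 (by positivity))
    (fun j hj hjℓ => mul_le_mul_of_nonneg_right (hηmono j hj hjℓ) (by positivity)) hrec' j hj hjℓ
  refine ⟨(hbound j hjℓ).1.trans (by gcongr; linarith), ?_⟩
  calc F j ≤ 2 * (1 / 2) ^ j * (D * M) + 2 * (η j * (D * M)) :=
        hFj.trans (by gcongr; exact hF₁M.trans (le_mul_of_one_le_left hM hD))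
    _ = 2 * D * ((1 / 2) ^ j + η j) * M := by ring
end

section
/- Let $\{F_j\}$, $\{p_j\}$ be nonnegative sequences and $\{\eta_j\}$ nonnegative and nondecreasing, satisfying for each $j$ with $1 \le j \le \ell - 1$: $F_{j+1} \le (1/2)^j F_1 + 2\eta_{j+1}\max\{p_0,\dots,p_j\} + 2\eta_{j+1}\max\{F_0,\dots,F_j\}$. Suppose further that for $1 \le j \le i$ one has $F_j \le 2(1+2\eta_1)\cdots(1+2\eta_j)\{(2^{-j}+\eta_j)(F_0+F_1) + \eta_j\max\{p_0,\dots,p_{j-1}\}\}$. Then $F_{i+1} \le 2(1+2\eta_1)\cdots(1+2\eta_{i+1})\{(2^{-i-1}+\eta_{i+1})(F_0+F_1) + \eta_{i+1}\max\{p_0,\dots,p_i\}\}$, i.e., the bound propagates by induction. -/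
/-!
With `P = ∏_{1 ≤ k ≤ i} (1 + 2 η_k)`, `M = max_{k ≤ i} p_k` and `η = η_{i+1}`, the induction
hypothesis (together with `F_0 ≤ F_0 + F_1`, `P ≥ 1` and the monotonicity of `η`) bounds every
`F_j`, `j ≤ i`, uniformly by `2 P ((1/2 + η)(F_0 + F_1) + η M)`. Feeding this into the recursion
for `F_{i+1}`, the cross term `2η · 2P(1/2 + η)(F_0 + F_1)` is exactly the new factor `1 + 2η`
acting on the `η (F_0 + F_1)` part of the claimed bound, and the remaining terms
`2^{-i} F_1 + 2η M` are absorbed using `P (1 + 2η) ≥ 1`.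
-/

open Finset

lemma monotone_prod_Icc_of_one_le {f : ℕ → ℝ} (hf : ∀ k, 1 ≤ f k) (a : ℕ) :
    Monotone fun n ↦ ∏ k ∈ Icc a n, f k := fun _ _ hmn ↦
  prod_le_prod_of_subset_of_one_le (Icc_subset_Icc_right hmn)
    (fun k _ ↦ zero_le_one.trans (hf k)) (fun k _ _ ↦ hf k)

section InductionStep

variable {η : ℕ → ℝ}

lemma one_le_one_add_two_mul (hη : ∀ k, 0 ≤ η k) (k : ℕ) : 1 ≤ 1 + 2 * η k := by
  linarith [hη k]

lemma one_le_prod_one_add_two_mul (hη : ∀ k, 0 ≤ η k) (s : Finset ℕ) :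
    1 ≤ ∏ k ∈ s, (1 + 2 * η k) :=
  one_le_prod fun k _ ↦ one_le_one_add_two_mul hη k

lemma induction_bound_mono (hη : ∀ k, 0 ≤ η k) (hηmono : Monotone η) {j i n : ℕ}
    (hj : 1 ≤ j) (hji : j ≤ i) (hjn : j ≤ n) {a m M : ℝ} (ha : 0 ≤ a) (hM : 0 ≤ M)
    (hmM : m ≤ M) :
    2 * (∏ k ∈ Icc 1 j, (1 + 2 * η k)) * (((1 / 2 : ℝ) ^ j + η j) * a + η j * m)
      ≤ 2 * (∏ k ∈ Icc 1 i, (1 + 2 * η k)) * ((1 / 2 + η n) * a + η n * M) := by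
  have hpow : (1 / 2 : ℝ) ^ j ≤ 1 / 2 := pow_le_of_le_one (by norm_num) (by norm_num) (by omega)
  have hηjn : η j ≤ η n := hηmono hjn
  have hηm : η j * m ≤ η n * M :=
    (mul_le_mul_of_nonneg_left hmM (hη j)).trans (mul_le_mul_of_nonneg_right hηjn hM)
  have hinner : ((1 / 2 : ℝ) ^ j + η j) * a + η j * m ≤ (1 / 2 + η n) * a + η n * M := by
    gcongr
  have hprod := monotone_prod_Icc_of_one_le (one_le_one_add_two_mul hη) 1 hji
  have hprod_nonneg : 0 ≤ ∏ k ∈ Icc 1 j, (1 + 2 * η k) :=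
    zero_le_one.trans (one_le_prod_one_add_two_mul hη _)
  have hbound_nonneg : 0 ≤ (1 / 2 + η n) * a + η n * M :=
    add_nonneg (mul_nonneg (by linarith [hη n]) ha) (mul_nonneg (hη n) hM)
  calc _ ≤ 2 * (∏ k ∈ Icc 1 j, (1 + 2 * η k)) * ((1 / 2 + η n) * a + η n * M) := by gcongr
    _ ≤ _ := by gcongr

lemma sup'_range_succ_le_of_induction_hyp (hη : ∀ k, 0 ≤ η k) (hηmono : Monotone η)
    {F p : ℕ → ℝ} {i : ℕ} (hF0 : 0 ≤ F 0) (hF1 : 0 ≤ F 1)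
    (hM : 0 ≤ (range (i + 1)).sup' nonempty_range_add_one p)
    (hind : ∀ j, ∀ hj : 1 ≤ j, j ≤ i →
      F j ≤ 2 * (∏ k ∈ Icc 1 j, (1 + 2 * η k)) *
        (((1 / 2 : ℝ) ^ j + η j) * (F 0 + F 1)
          + η j * (range j).sup' (nonempty_range_iff.mpr (by omega)) p)) :
    (range (i + 1)).sup' nonempty_range_add_one F
      ≤ 2 * (∏ k ∈ Icc 1 i, (1 + 2 * η k)) *
        ((1 / 2 + η (i + 1)) * (F 0 + F 1)
          + η (i + 1) * (range (i + 1)).sup' nonempty_range_add_one p) := by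
  refine sup'_le _ _ fun j hj ↦ ?_
  rw [mem_range] at hj
  rcases Nat.eq_zero_or_pos j with rfl | hj1
  · have hP := one_le_prod_one_add_two_mul hη (Icc 1 i)
    have hηM := mul_nonneg (hη (i + 1)) hM
    have hηa := mul_nonneg (hη (i + 1)) (add_nonneg hF0 hF1)
    nlinarith
  · exact (hind j hj1 (by omega)).trans <| induction_bound_mono hη hηmono hj1 (by omega) (by omega)
      (add_nonneg hF0 hF1) hM (sup'_mono p (range_subset_range.mpr (by omega)) _)

end InductionStep

lemma recursion_le_induction_bound {x P e a F₁ M : ℝ} (hx : 0 ≤ x) (hP : 1 ≤ P) (he : 0 ≤ e)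
    (hF₁ : 0 ≤ F₁) (hF₁a : F₁ ≤ a) (hM : 0 ≤ M) :
    x * F₁ + 2 * e * M + 2 * e * (2 * P * ((1 / 2 + e) * a + e * M))
      ≤ 2 * (P * (1 + 2 * e)) * ((x * (1 / 2) + e) * a + e * M) := by
  have hP' : 1 ≤ P * (1 + 2 * e) := one_le_mul_of_one_le_of_one_le hP (by linarith)
  linarith [mul_nonneg hx (sub_nonneg.2 hF₁a),
    mul_nonneg (mul_nonneg hx (hF₁.trans hF₁a)) (sub_nonneg.2 hP'),
    mul_nonneg (mul_nonneg he hM) (sub_nonneg.2 hP)]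

/-- The induction step (M-L-9) in the proof of Lemma 3.1. -/
theorem stmt3 (ℓ i : ℕ) (F p η : ℕ → ℝ)
    (hF : ∀ j ≤ ℓ, 0 ≤ F j) (hp : ∀ j ≤ ℓ, 0 ≤ p j)
    (hη0 : ∀ j, 0 ≤ η j) (hηmono : Monotone η)
    (hi : 1 ≤ i) (hiℓ : i + 1 ≤ ℓ)
    (hrec : ∀ j, ∀ hj : 1 ≤ j, j + 1 ≤ ℓ →
      F (j + 1) ≤ (1 / 2 : ℝ) ^ j * F 1
        + 2 * η (j + 1) *
          (Finset.range (j + 1)).sup' (Finset.nonempty_range_iff.mpr (by omega)) p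
        + 2 * η (j + 1) *
          (Finset.range (j + 1)).sup' (Finset.nonempty_range_iff.mpr (by omega)) F)
    (hind : ∀ j, ∀ hj : 1 ≤ j, j ≤ i →
      F j ≤ 2 * (∏ k ∈ Finset.Icc 1 j, (1 + 2 * η k)) *
        (((1 / 2 : ℝ) ^ j + η j) * (F 0 + F 1)
          + η j * (Finset.range j).sup' (Finset.nonempty_range_iff.mpr (by omega)) p)) :
    F (i + 1) ≤ 2 * (∏ k ∈ Finset.Icc 1 (i + 1), (1 + 2 * η k)) *
      (((1 / 2 : ℝ) ^ (i + 1) + η (i + 1)) * (F 0 + F 1)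
        + η (i + 1) *
          (Finset.range (i + 1)).sup' (Finset.nonempty_range_iff.mpr (by omega)) p) := by
  have hM : 0 ≤ (range (i + 1)).sup' nonempty_range_add_one p :=
    (hp 0 (by omega)).trans (le_sup' p (mem_range.mpr (by omega)))
  have hsupF := sup'_range_succ_le_of_induction_hyp hη0 hηmono (hF 0 (by omega)) (hF 1 (by omega))
    hM hind
  rw [prod_Icc_succ_top (by omega), pow_succ]
  calc F (i + 1) ≤ _ := hrec i hi hiℓ
    _ ≤ _ := by have hη := hη0 (i + 1); gcongr
    _ ≤ _ := recursion_le_induction_bound (by positivity) (one_le_prod_one_add_two_mul hη0 _)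
      (hη0 (i + 1)) (hF 1 (by omega))
      (le_add_of_nonneg_left (hF 0 (by omega))) hM
end
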